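/- arXiv:1204.0691 — 2 statements merged into one kernel-verified Lean document; each statement's English description precedes it below -/
import Mathlib

section
/- If u is a positive harmonic function on the unit disk D, then for any two points z, z₀ ∈ D one has exp(−ρ(z,z₀)) ≤ u(z)/u(z₀) ≤ exp(ρ(z,z₀)), where ρ is the Poincaré distance ρ(z,z₀) = log((1+t)/(1−t)) with t = |z−z₀|/|1−conj(z₀)·z|. -/
open Complex Metric Set ComplexConjugate

/-!
Precompose `F` with the disk automorphism sending `0` to `z₀` and postcompose it with the Cayley
transform `w ↦ (w - F z₀) / (w + conj (F z₀))`, which maps the right half-plane onto the disk and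
`F z₀` to `0`. The Schwarz lemma for the resulting self-map of the disk gives
`‖F z - F z₀‖ ≤ t ‖F z + conj (F z₀)‖`, where `t` is the pseudo-hyperbolic distance from `z₀`
to `z`. Comparing real parts, `|u z - u z₀| ≤ t (u z + u z₀)`, which rearranges to
`(1 - t) / (1 + t) ≤ u z / u z₀ ≤ (1 + t) / (1 - t)`, and `log ((1 + t) / (1 - t)) = ρ(z, z₀)`.
-/

namespace Complex

noncomputable def diskMobius (a z : ℂ) : ℂ := (z - a) / (1 - conj a * z)

section DiskMobius

variable {a z : ℂ}

lemma one_sub_conj_mul_ne_zero (ha : ‖a‖ < 1) (hz : ‖z‖ < 1) : 1 - conj a * z ≠ 0 := by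
  refine sub_ne_zero.mpr fun h => ?_
  have : ‖conj a * z‖ < 1 := by
    rw [norm_mul, RCLike.norm_conj]
    exact mul_lt_one_of_nonneg_of_lt_one_left (norm_nonneg a) ha hz.le
  rw [← h, norm_one] at this
  exact lt_irrefl _ this

lemma normSq_one_sub_conj_mul_sub_normSq_sub (a z : ℂ) :
    normSq (1 - conj a * z) - normSq (z - a) = (1 - normSq a) * (1 - normSq z) := by
  simp only [normSq_apply, sub_re, sub_im, mul_re, mul_im, conj_re, conj_im, one_re, one_im]
  ring

lemma norm_diskMobius_lt_one (ha : ‖a‖ < 1) (hz : ‖z‖ < 1) : ‖diskMobius a z‖ < 1 := by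
  rw [diskMobius, norm_div, div_lt_one (norm_pos_iff.mpr (one_sub_conj_mul_ne_zero ha hz)),
    ← sq_lt_sq₀ (norm_nonneg _) (norm_nonneg _), Complex.sq_norm, Complex.sq_norm, ← sub_pos,
    normSq_one_sub_conj_mul_sub_normSq_sub]
  have hsq {w : ℂ} (hw : ‖w‖ < 1) : 0 < 1 - normSq w := by
    rw [normSq_eq_norm_sq, sub_pos]
    exact pow_lt_one₀ (norm_nonneg w) hw two_ne_zero
  exact mul_pos (hsq ha) (hsq hz)

lemma mapsTo_diskMobius (ha : ‖a‖ < 1) : MapsTo (diskMobius a) (ball 0 1) (ball 0 1) :=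
  fun _ hz => mem_ball_zero_iff.mpr <| norm_diskMobius_lt_one ha (mem_ball_zero_iff.mp hz)

lemma differentiableOn_diskMobius (ha : ‖a‖ < 1) :
    DifferentiableOn ℂ (diskMobius a) (ball 0 1) :=
  .div (by fun_prop) (by fun_prop) fun _ hz =>
    one_sub_conj_mul_ne_zero ha (mem_ball_zero_iff.mp hz)

lemma diskMobius_neg_diskMobius (ha : ‖a‖ < 1) (hz : ‖z‖ < 1) :
    diskMobius (-a) (diskMobius a z) = z := by
  have hω : diskMobius a z * (1 - conj a * z) = z - a :=
    div_mul_cancel₀ _ (one_sub_conj_mul_ne_zero ha hz)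
  have ha' : ‖-a‖ < 1 := by rwa [norm_neg]
  rw [diskMobius, div_eq_iff (one_sub_conj_mul_ne_zero ha' (norm_diskMobius_lt_one ha hz)),
    map_neg]
  linear_combination hω

theorem norm_le_norm_diskMobius_of_mapsTo_ball {E : Type*} [NormedAddCommGroup E]
    [NormedSpace ℂ E] {f : ℂ → E} (hd : DifferentiableOn ℂ f (ball 0 1))
    (h_maps : MapsTo f (ball 0 1) (closedBall 0 1)) (ha : ‖a‖ < 1) (h₀ : f a = 0)
    (hz : ‖z‖ < 1) : ‖f z‖ ≤ ‖diskMobius a z‖ := by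
  have ha' : ‖-a‖ < 1 := by rwa [norm_neg]
  have := norm_le_norm_of_mapsTo_ball
    (hd.comp (differentiableOn_diskMobius ha') (mapsTo_diskMobius ha'))
    (h_maps.comp (mapsTo_diskMobius ha')) (by simp [diskMobius, h₀]) (norm_diskMobius_lt_one ha hz)
  rwa [Function.comp_apply, diskMobius_neg_diskMobius ha hz] at this

end DiskMobius

noncomputable def halfPlaneCayley (c w : ℂ) : ℂ := (w - c) / (w + conj c)

section HalfPlaneCayley

variable {c w : ℂ}

lemma add_conj_ne_zero_of_re_pos (hw : 0 < w.re) (hc : 0 < c.re) : w + conj c ≠ 0 := by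
  intro h
  have := congrArg re h
  rw [add_re, conj_re, zero_re] at this
  linarith

lemma normSq_add_conj_sub_normSq_sub (c w : ℂ) :
    normSq (w + conj c) - normSq (w - c) = 4 * w.re * c.re := by
  simp only [normSq_apply, add_re, add_im, sub_re, sub_im, conj_re, conj_im]
  ring

lemma norm_halfPlaneCayley_lt_one (hw : 0 < w.re) (hc : 0 < c.re) :
    ‖halfPlaneCayley c w‖ < 1 := by
  rw [halfPlaneCayley, norm_div, div_lt_one (norm_pos_iff.mpr (add_conj_ne_zero_of_re_pos hw hc)),
    ← sq_lt_sq₀ (norm_nonneg _) (norm_nonneg _), Complex.sq_norm, Complex.sq_norm, ← sub_pos,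
    normSq_add_conj_sub_normSq_sub]
  positivity

end HalfPlaneCayley

theorem norm_sub_le_norm_diskMobius_mul_of_re_pos {F : ℂ → ℂ} {z₀ z : ℂ}
    (hF : DifferentiableOn ℂ F (ball 0 1)) (hre : ∀ w ∈ ball (0 : ℂ) 1, 0 < (F w).re)
    (hz₀ : ‖z₀‖ < 1) (hz : ‖z‖ < 1) :
    ‖F z - F z₀‖ ≤ ‖diskMobius z₀ z‖ * ‖F z + conj (F z₀)‖ := by
  have hc : 0 < (F z₀).re := hre z₀ (mem_ball_zero_iff.mpr hz₀)
  have hd : DifferentiableOn ℂ (halfPlaneCayley (F z₀) ∘ F) (ball 0 1) :=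
    .div (hF.sub_const _) (hF.add_const _) fun w hw => add_conj_ne_zero_of_re_pos (hre w hw) hc
  have h_maps : MapsTo (halfPlaneCayley (F z₀) ∘ F) (ball 0 1) (closedBall 0 1) := fun w hw =>
    mem_closedBall_zero_iff.mpr (norm_halfPlaneCayley_lt_one (hre w hw) hc).le
  have hSchwarz := norm_le_norm_diskMobius_of_mapsTo_ball hd h_maps hz₀
    (by simp [halfPlaneCayley]) hz
  rwa [Function.comp_apply, halfPlaneCayley, norm_div, div_le_iff₀ (norm_pos_iff.mpr
    (add_conj_ne_zero_of_re_pos (hre z (mem_ball_zero_iff.mpr hz)) hc))] at hSchwarz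

lemma abs_re_sub_re_le_of_norm_sub_le {c w : ℂ} {t : ℝ} (ht₀ : 0 ≤ t) (ht₁ : t ≤ 1)
    (h : ‖w - c‖ ≤ t * ‖w + conj c‖) : |w.re - c.re| ≤ t * |w.re + c.re| := by
  have hsq : normSq (w - c) ≤ t ^ 2 * normSq (w + conj c) := by
    rw [← Complex.sq_norm, ← Complex.sq_norm, ← mul_pow]
    exact pow_le_pow_left₀ (norm_nonneg _) h 2
  simp only [normSq_apply, add_re, add_im, sub_re, sub_im, conj_re, conj_im] at hsq
  rw [← abs_of_nonneg ht₀, ← abs_mul, ← sq_le_sq]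
  -- `w - c` and `w + conj c` have the same imaginary part, and `t ≤ 1` lets it drop out.
  nlinarith [mul_nonneg (sub_nonneg.mpr (pow_le_one₀ (n := 2) ht₀ ht₁)) (sq_nonneg (w.im - c.im))]

end Complex

lemma div_le_div_and_div_le_div_of_abs_sub_le {a b t : ℝ} (ha : 0 < a) (hb : 0 < b) (ht : t < 1)
    (h : |a - b| ≤ t * (a + b)) : (1 - t) / (1 + t) ≤ a / b ∧ a / b ≤ (1 + t) / (1 - t) := by
  have ht₀ : 0 ≤ t := nonneg_of_mul_nonneg_left ((abs_nonneg _).trans h) (by positivity)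
  rw [abs_le] at h
  constructor
  · rw [div_le_div_iff₀ (by linarith) hb]; linarith
  · rw [div_le_div_iff₀ hb (by linarith)]; linarith

/-- Invariant Harnack inequalities on the unit disk:
`exp(-ρ(z,z₀)) ≤ u z / u z₀ ≤ exp(ρ(z,z₀))` where `ρ` is the Poincaré distance
of curvature `-1`. -/
theorem harnack_inequality_invariant (u : ℂ → ℝ) (F : ℂ → ℂ)
    (hF : DifferentiableOn ℂ F (ball 0 1))
    (huF : ∀ z ∈ ball (0 : ℂ) 1, u z = (F z).re)
    (hpos : ∀ z ∈ ball (0 : ℂ) 1, 0 < u z) :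
    ∀ z ∈ ball (0 : ℂ) 1, ∀ z₀ ∈ ball (0 : ℂ) 1,
      Real.exp (-(Real.log ((1 + ‖(z - z₀) / (1 - (starRingEnd ℂ) z₀ * z)‖) /
          (1 - ‖(z - z₀) / (1 - (starRingEnd ℂ) z₀ * z)‖)))) ≤ u z / u z₀ ∧
      u z / u z₀ ≤
        Real.exp (Real.log ((1 + ‖(z - z₀) / (1 - (starRingEnd ℂ) z₀ * z)‖) /
          (1 - ‖(z - z₀) / (1 - (starRingEnd ℂ) z₀ * z)‖))) := by
  intro z hz z₀ hz₀
  have hre : ∀ w ∈ ball (0 : ℂ) 1, 0 < (F w).re := fun w hw => huF w hw ▸ hpos w hw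
  have ht : ‖diskMobius z₀ z‖ < 1 :=
    norm_diskMobius_lt_one (mem_ball_zero_iff.mp hz₀) (mem_ball_zero_iff.mp hz)
  have hbound := abs_re_sub_re_le_of_norm_sub_le (norm_nonneg _) ht.le
    (norm_sub_le_norm_diskMobius_mul_of_re_pos hF hre (mem_ball_zero_iff.mp hz₀)
      (mem_ball_zero_iff.mp hz))
  rw [abs_of_pos (add_pos (hre z hz) (hre z₀ hz₀)), ← huF z hz, ← huF z₀ hz₀] at hbound
  have hratio : 0 < (1 + ‖diskMobius z₀ z‖) / (1 - ‖diskMobius z₀ z‖) :=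
    div_pos (by positivity) (sub_pos.mpr ht)
  rw [← diskMobius, Real.exp_neg, Real.exp_log hratio, inv_div]
  exact div_le_div_and_div_le_div_of_abs_sub_le (hpos z hz) (hpos z₀ hz₀) ht hbound
end

section
/- Let f be holomorphic on the unit disk D with 0 < |f(z)| < M for all z ∈ D. Then for every z ∈ D, |f(z)| ≤ |f(0)|^α · M^(1−α), where α = (1−|z|)/(1+|z|). -/
/-!
`u = log M - log ‖f‖` is a positive harmonic function on the disc, so Harnack's inequality gives
`u z ≥ (1 - ‖z‖) / (1 + ‖z‖) * u 0`; exponentiating yields the bound. Harnack's inequality itself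
follows from the Schwarz lemma: write `u = re F` with `F` holomorphic, and compose `F` with the
Möbius map of the right half-plane onto the unit disc sending `F c` to `0`.
-/

open Complex Metric InnerProductSpace ComplexConjugate

namespace Complex

theorem norm_sub_lt_norm_add_conj {a b : ℂ} (ha : 0 < a.re) (hb : 0 < b.re) :
    ‖a - b‖ < ‖a + conj b‖ := by
  rw [← sq_lt_sq₀ (norm_nonneg _) (norm_nonneg _), Complex.sq_norm, Complex.sq_norm,
    normSq_apply, normSq_apply]
  simp only [sub_re, sub_im, add_re, add_im, conj_re, conj_im]
  nlinarith [mul_pos ha hb]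

theorem mul_re_le_mul_re_of_norm_sub_le {a b : ℂ} {r : ℝ} (hr₀ : 0 ≤ r) (hr₁ : r ≤ 1)
    (hb : 0 < b.re) (h : ‖a - b‖ ≤ r * ‖a + conj b‖) : (1 - r) * b.re ≤ (1 + r) * a.re := by
  have hsq : ‖a - b‖ ^ 2 ≤ (r * ‖a + conj b‖) ^ 2 := pow_le_pow_left₀ (norm_nonneg _) h 2
  rw [mul_pow, Complex.sq_norm, Complex.sq_norm, normSq_apply, normSq_apply] at hsq
  simp only [sub_re, sub_im, add_re, add_im, conj_re, conj_im] at hsq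
  have hre : (a.re - b.re) ^ 2 ≤ (r * (a.re + b.re)) ^ 2 := by
    nlinarith [mul_nonneg (mul_nonneg hr₀ (sub_nonneg.2 hr₁)) (sq_nonneg (a.im - b.im))]
  have habs := sq_le_sq.mp hre
  rw [abs_mul, abs_of_nonneg hr₀] at habs
  cases abs_cases (a.re - b.re) <;> cases abs_cases (a.re + b.re) <;> nlinarith

end Complex

theorem InnerProductSpace.HarmonicOnNhd.harnack_ball {u : ℂ → ℝ} {c z : ℂ} {R : ℝ}
    (hu : HarmonicOnNhd u (ball c R)) (hpos : ∀ w ∈ ball c R, 0 < u w) (hz : z ∈ ball c R) :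
    (R - dist z c) * u c ≤ (R + dist z c) * u z := by
  have hR : 0 < R := pos_of_mem_ball hz
  have hc : c ∈ ball c R := mem_ball_self hR
  obtain ⟨F, hFan, hFre⟩ := hu.exists_analyticOnNhd_ball_re_eq
  have hFre : ∀ w ∈ ball c R, (F w).re = u w := fun w hw => hFre hw
  have hFpos : ∀ w ∈ ball c R, 0 < (F w).re := fun w hw => (hFre w hw).symm ▸ hpos w hw
  have hlt : ∀ w ∈ ball c R, ‖F w - F c‖ < ‖F w + conj (F c)‖ := fun w hw =>
    norm_sub_lt_norm_add_conj (hFpos w hw) (hFpos c hc)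
  have hden : ∀ w ∈ ball c R, 0 < ‖F w + conj (F c)‖ := fun w hw =>
    (norm_nonneg _).trans_lt (hlt w hw)
  set G : ℂ → ℂ := fun w => (F w - F c) / (F w + conj (F c))
  have hGd : DifferentiableOn ℂ G (ball c R) := fun w hw =>
    ((hFan w hw).differentiableAt.sub_const _).div ((hFan w hw).differentiableAt.add_const _)
      (norm_pos_iff.mp (hden w hw)) |>.differentiableWithinAt
  have hGc : G c = 0 := by simp [G]
  have hGmaps : Set.MapsTo G (ball c R) (closedBall (G c) 1) := fun w hw => by
    rw [hGc, mem_closedBall_zero_iff, norm_div, div_le_one (hden w hw)]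
    exact (hlt w hw).le
  have hschwarz := dist_le_div_mul_dist_of_mapsTo_ball hGd hGmaps hz
  rw [hGc, dist_zero_right, norm_div, div_le_iff₀ (hden z hz)] at hschwarz
  have hr₁ : dist z c / R ≤ 1 := (div_le_one hR).mpr (mem_ball.mp hz).le
  have key := mul_re_le_mul_re_of_norm_sub_le (by positivity) hr₁ (hFpos c hc)
    (hschwarz.trans_eq (by ring))
  rw [hFre z hz, hFre c hc] at key
  calc (R - dist z c) * u c = R * ((1 - dist z c / R) * u c) := by field_simp
    _ ≤ R * ((1 + dist z c / R) * u z) := by gcongr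
    _ = (R + dist z c) * u z := by field_simp

theorem Real.le_rpow_mul_rpow_of_log_le {x a b s t : ℝ} (hx : 0 < x) (ha : 0 < a) (hb : 0 < b)
    (h : Real.log x ≤ s * Real.log a + t * Real.log b) : x ≤ a ^ s * b ^ t := by
  calc x = Real.exp (Real.log x) := (Real.exp_log hx).symm
    _ ≤ Real.exp (s * Real.log a + t * Real.log b) := Real.exp_le_exp.mpr h
    _ = a ^ s * b ^ t := by
      rw [Real.exp_add, Real.rpow_def_of_pos ha, Real.rpow_def_of_pos hb, mul_comm s, mul_comm t]

/-- Pointwise two-constants theorem: if `f` is holomorphic on the unit disk with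
`0 < |f| < M`, then `|f z| ≤ |f 0| ^ α * M ^ (1 - α)` with `α = (1-|z|)/(1+|z|)`. -/
theorem two_constants_pointwise (f : ℂ → ℂ) (M : ℝ) (hM : 0 < M)
    (hf : DifferentiableOn ℂ f (ball 0 1))
    (hbd : ∀ z ∈ ball (0 : ℂ) 1, 0 < ‖f z‖ ∧ ‖f z‖ < M) :
    ∀ z ∈ ball (0 : ℂ) 1,
      ‖f z‖ ≤ ‖f 0‖ ^ ((1 - ‖z‖) / (1 + ‖z‖)) * M ^ (1 - (1 - ‖z‖) / (1 + ‖z‖)) := by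
  intro z hz
  have hu : HarmonicOnNhd (fun w => Real.log M - Real.log ‖f w‖) (ball 0 1) := fun w hw =>
    (harmonicAt_const _).sub ((hf.analyticAt (isOpen_ball.mem_nhds hw)).harmonicAt_log_norm
      (norm_pos_iff.mp (hbd w hw).1))
  have hpos : ∀ w ∈ ball (0 : ℂ) 1, 0 < Real.log M - Real.log ‖f w‖ := fun w hw =>
    sub_pos.mpr (Real.log_lt_log (hbd w hw).1 (hbd w hw).2)
  have harnack := hu.harnack_ball hpos hz
  rw [dist_zero_right] at harnack
  refine Real.le_rpow_mul_rpow_of_log_le (hbd z hz).1 (hbd 0 (mem_ball_self one_pos)).1 hM ?_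
  have h1 : 0 < 1 + ‖z‖ := by positivity
  have : (1 - ‖z‖) / (1 + ‖z‖) * (Real.log M - Real.log ‖f 0‖) ≤ Real.log M - Real.log ‖f z‖ := by
    rw [div_mul_eq_mul_div, div_le_iff₀ h1]
    linarith
  linarith
end
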